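/- Every stable model of a finite EG program satisfies the program's completion (the set consisting of the completed definitions of all predicate symbols occurring in the program together with the universal closures of the formula representations of all its constraints). -/

import Mathlib

namespace EG


/-! ### Relation symbols -/

inductive Rel : Type where
  | req | rne | rlt | rle | rgt | rge

/-- Evaluation of a relation symbol relative to a strict total order `lt`
on the domain (equality is genuine equality of domain elements). -/
def Rel.eval {α : Type} (lt : α → α → Prop) : Rel → α → α → Prop
  | .req, a, b => a = b
  | .rne, a, b => a ≠ b
  | .rlt, a, b => lt a b
  | .rle, a, b => lt a b ∨ a = b
  | .rgt, a, b => lt b a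
  | .rge, a, b => lt b a ∨ a = b

/-! ### Precomputed terms -/

/-- Precomputed terms over a type `C` of symbolic constants:
numerals, symbolic constants, `inf`, `sup`, and applications of a symbolic
constant to a tuple of precomputed terms. -/
inductive Pre (C : Type) : Type where
  | inf
  | sup
  | num (n : ℤ)
  | sym (c : C)
  | app (f : C) (args : List (Pre C))

/-- The assumed total order on precomputed terms: a strict total order with
`inf` least, `sup` greatest, in which numerals are ordered as the integers. -/
structure PreOrderOK {C : Type} (lt : Pre C → Pre C → Prop) : Prop where
  irrefl : ∀ a, ¬ lt a a
  trans : ∀ a b c, lt a b → lt b c → lt a c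
  total : ∀ a b, lt a b ∨ a = b ∨ lt b a
  inf_least : ∀ a, a ≠ Pre.inf → lt Pre.inf a
  sup_greatest : ∀ a, a ≠ Pre.sup → lt a Pre.sup
  num_iff : ∀ m n : ℤ, (lt (Pre.num m) (Pre.num n) ↔ m < n)

/-- Atoms `p(r)` where `r` is a tuple of precomputed terms. -/
abbrev EGAtom (C : Type) := C × List (Pre C)

/-- An interpretation is a set of atoms over precomputed terms. -/
abbrev Interp (C : Type) := Set (EGAtom C)

/-- Valuations: variables (natural numbers) ↦ precomputed terms. -/
abbrev Val (C : Type) := ℕ → Pre C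

/-- Simultaneously update a valuation on a list of variables by a list of values. -/
def updList {C : Type} : Val C → List ℕ → List (Pre C) → Val C
  | v, [], _ => v
  | v, _ :: _, [] => v
  | v, x :: xs, r :: rs => Function.update (updList v xs rs) x r

/-! ### Terms -/

/-- Terms over symbolic constants `C` and operation names `O`. -/
inductive Term (C O : Type) : Type where
  | num (n : ℤ)
  | sym (c : C)
  | var (x : ℕ)
  | inf
  | sup
  | app (f : C) (ts : List (Term C O))
  | op (o : O) (ts : List (Term C O))
  | interval (t₁ t₂ : Term C O)

mutual
/-- The list of variables occurring in a term. -/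
def Term.varList {C O : Type} : Term C O → List ℕ
  | .num _ => []
  | .sym _ => []
  | .var x => [x]
  | .inf => []
  | .sup => []
  | .app _ ts => Term.varListL ts
  | .op _ ts => Term.varListL ts
  | .interval t₁ t₂ => t₁.varList ++ t₂.varList

def Term.varListL {C O : Type} : List (Term C O) → List ℕ
  | [] => []
  | t :: ts => t.varList ++ Term.varListL ts
end

/-- A term (or tuple of terms, etc.) is ground if it contains no variables. -/
def Term.Ground {C O : Type} (t : Term C O) : Prop := t.varList = []

mutual
/-- The set of values of a term under a valuation `v` (for a ground term this
is the set `[t]` of its values, independent of `v`). `opFun` gives the partial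
integer function denoted by each operation name. -/
def Term.val {C O : Type} (opFun : O → List ℤ → Option ℤ) (v : Val C) :
    Term C O → Set (Pre C)
  | .num n => {Pre.num n}
  | .sym c => {Pre.sym c}
  | .var x => {v x}
  | .inf => {Pre.inf}
  | .sup => {Pre.sup}
  | .app f ts => {r | ∃ rs : List (Pre C), Term.vals opFun v ts rs ∧ r = Pre.app f rs}
  | .op o ts => {r | ∃ ks : List ℤ, Term.vals opFun v ts (ks.map Pre.num) ∧
      ∃ m : ℤ, opFun o ks = some m ∧ r = Pre.num m}
  | .interval t₁ t₂ => {r | ∃ k₁ k₂ m : ℤ, Pre.num k₁ ∈ Term.val opFun v t₁ ∧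
      Pre.num k₂ ∈ Term.val opFun v t₂ ∧ k₁ ≤ m ∧ m ≤ k₂ ∧ r = Pre.num m}

/-- `Term.vals opFun v ts rs` : the tuple `rs` of precomputed terms is a tuple of
values of the tuple `ts` of terms (componentwise). -/
def Term.vals {C O : Type} (opFun : O → List ℤ → Option ℤ) (v : Val C) :
    List (Term C O) → List (Pre C) → Prop
  | [], rs => rs = []
  | t :: ts, rs => ∃ r rs', rs = r :: rs' ∧ r ∈ Term.val opFun v t ∧ Term.vals opFun v ts rs'
end

mutual
/-- Embedding of precomputed terms into terms. -/
def Pre.toTerm {C O : Type} : Pre C → Term C O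
  | .inf => .inf
  | .sup => .sup
  | .num n => .num n
  | .sym c => .sym c
  | .app f rs => .app f (Pre.toTermL rs)

def Pre.toTermL {C O : Type} : List (Pre C) → List (Term C O)
  | [] => []
  | r :: rs => Pre.toTerm r :: Pre.toTermL rs
end


/-! ### Formulas with aggregates -/

mutual
/-- Arguments of the extended (aggregate) language. -/
inductive AArg (C O A : Type) : Type where
  | num (n : ℤ)
  | sym (c : C)
  | var (x : ℕ)
  | inf
  | sup
  | app (f : C) (args : List (AArg C O A))
  | agg (a : A) (xs : List ℕ) (F : AFml C O A)

/-- Formulas of the extended (aggregate) first-order language over the domain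
of precomputed terms. -/
inductive AFml (C O A : Type) : Type where
  | atom (p : C) (args : List (AArg C O A))
  | cmp (rel : Rel) (a₁ a₂ : AArg C O A)
  | mem (a : AArg C O A) (t : Term C O)
  | bot
  | impl (F G : AFml C O A)
  | all (x : ℕ) (F : AFml C O A)
end

section Sem
variable {C O A : Type}
variable (opFun : O → List ℤ → Option ℤ)
variable (aggFun : A → Set (List (Pre C)) → Pre C)
variable (lt : Pre C → Pre C → Prop)

mutual
/-- The precomputed term denoted by an argument (joint recursion with `AFml.sat`). -/
def AArg.eval (I : Interp C) : Val C → AArg C O A → Pre C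
  | _, .num n => Pre.num n
  | _, .sym c => Pre.sym c
  | v, .var x => v x
  | _, .inf => Pre.inf
  | _, .sup => Pre.sup
  | v, .app f args => Pre.app f (AArg.evalL I v args)
  | v, .agg a xs F => aggFun a
      {rs : List (Pre C) | rs.length = xs.length ∧ AFml.sat I (updList v xs rs) F}

def AArg.evalL (I : Interp C) : Val C → List (AArg C O A) → List (Pre C)
  | _, [] => []
  | v, a :: as => AArg.eval I v a :: AArg.evalL I v as

/-- Satisfaction of a formula by an interpretation `I` under a valuation `v`. -/
def AFml.sat (I : Interp C) : Val C → AFml C O A → Prop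
  | v, .atom p args => (p, AArg.evalL I v args) ∈ I
  | v, .cmp rel a₁ a₂ => Rel.eval lt rel (AArg.eval I v a₁) (AArg.eval I v a₂)
  | v, .mem a t => AArg.eval I v a ∈ Term.val opFun v t
  | _, .bot => False
  | v, .impl F G => AFml.sat I v F → AFml.sat I v G
  | v, .all x F => ∀ r : Pre C, AFml.sat I (Function.update v x r) F
end

end Sem
/-! ### Infinitary propositional formulas -/

/-- Infinitary propositional formulas over a type `α` of atoms: atoms, `⊥`,
conjunctions and disjunctions of arbitrary families of formulas, implication. -/
inductive IForm (α : Type) : Type 1 where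
  | atom (a : α)
  | bot
  | conj (ι : Type) (f : ι → IForm α)
  | disj (ι : Type) (f : ι → IForm α)
  | impl (F G : IForm α)

namespace IForm

variable {α : Type}

/-- `⊤` as the empty conjunction. -/
def top : IForm α := conj Empty (fun e => e.elim)
def neg (F : IForm α) : IForm α := impl F bot
def and (F G : IForm α) : IForm α := conj Bool (fun b => cond b F G)
def or (F G : IForm α) : IForm α := disj Bool (fun b => cond b F G)
def conjList (l : List (IForm α)) : IForm α := conj (Fin l.length) (fun i => l.get i)

/-- Classical satisfaction of infinitary formulas. -/
def sat (I : Set α) : IForm α → Prop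
  | atom a => a ∈ I
  | bot => False
  | conj _ f => ∀ i, sat I (f i)
  | disj _ f => ∃ i, sat I (f i)
  | impl F G => sat I F → sat I G

open Classical in
/-- The Ferraris reduct of an infinitary formula relative to an interpretation:
every (maximal) subformula not satisfied by `I` is replaced by `⊥`. -/
noncomputable def reduct (I : Set α) : IForm α → IForm α
  | atom a => if a ∈ I then atom a else bot
  | bot => bot
  | conj ι f => conj ι (fun i => reduct I (f i))
  | disj ι f => disj ι (fun i => reduct I (f i))
  | impl F G => if sat I (impl F G) then impl (reduct I F) (reduct I G) else bot

/-- `I` is a stable model of `F` (Ferraris semantics for infinitary formulas):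
`I` is a minimal model of the reduct `F^I`. -/
def stable (I : Set α) (F : IForm α) : Prop :=
  sat I (reduct I F) ∧ ∀ J : Set α, J ⊆ I → sat J (reduct I F) → J = I

/-- Satisfaction in the infinitary logic of here-and-there `HT^∞`, for an
HT-interpretation given by `J ⊆ I` ("here" `J`, "there" `I`). -/
def satHT (J I : Set α) : IForm α → Prop
  | atom a => a ∈ J
  | bot => False
  | conj _ f => ∀ i, satHT J I (f i)
  | disj _ f => ∃ i, satHT J I (f i)
  | impl F G => (satHT J I F → satHT J I G) ∧ (sat I F → sat I G)

/-- Strong equivalence of infinitary formulas, i.e. equivalence in `HT^∞`. -/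
def HTEquiv (F G : IForm α) : Prop :=
  ∀ J I : Set α, J ⊆ I → (satHT J I F ↔ satHT J I G) ∧ (sat I F ↔ sat I G)

mutual
/-- Positive nonnegated atoms of an infinitary formula. -/
def Pnn : IForm α → Set α
  | atom a => {a}
  | bot => ∅
  | conj _ f => ⋃ i, Pnn (f i)
  | disj _ f => ⋃ i, Pnn (f i)
  | impl _ bot => ∅
  | impl G H => Nnn G ∪ Pnn H

/-- Negative nonnegated atoms of an infinitary formula. -/
def Nnn : IForm α → Set α
  | atom _ => ∅
  | bot => ∅
  | conj _ f => ⋃ i, Nnn (f i)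
  | disj _ f => ⋃ i, Nnn (f i)
  | impl _ bot => ∅
  | impl G H => Pnn G ∪ Nnn H
end

end IForm

/-! ### Infinitary programs -/

/-- An infinitary rule `F → A`. -/
structure IRule (α : Type) : Type 1 where
  body : IForm α
  head : α

/-- An infinitary program: a conjunction (represented as a set) of infinitary rules. -/
abbrev IProg (α : Type) := Set (IRule α)

def IRule.toForm {α : Type} (r : IRule α) : IForm α := .impl r.body (.atom r.head)

namespace IProg
variable {α : Type}

/-- `I` satisfies the program (i.e., the conjunction of its rules). -/
def sat (I : Set α) (P : IProg α) : Prop := ∀ r ∈ P, IForm.sat I r.toForm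

/-- `I` is a stable model of the program, i.e., of the conjunction of its rules:
`I` is a minimal model of the reduct of that conjunction. -/
def stable (I : Set α) (P : IProg α) : Prop :=
  (∀ r ∈ P, IForm.sat I (IForm.reduct I r.toForm)) ∧
  ∀ J : Set α, J ⊆ I → (∀ r ∈ P, IForm.sat J (IForm.reduct I r.toForm)) → J = I

/-- `I` is supported by the program. -/
def supported (I : Set α) (P : IProg α) : Prop :=
  ∀ a ∈ I, ∃ r ∈ P, r.head = a ∧ IForm.sat I r.body

/-- `I` satisfies the completion of `P`, with signature (set of atoms) `S`:
the conjunction over all atoms `A ∈ S` of `A ↔ ⋁ (P|_A)`. -/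
def satCompletionOn (S : Set α) (I : Set α) (P : IProg α) : Prop :=
  ∀ a ∈ S, (a ∈ I ↔ ∃ r ∈ P, r.head = a ∧ IForm.sat I r.body)

/-- `B` is a parent of `A` relative to `P` and `I`. -/
def parent (P : IProg α) (I : Set α) (B A : α) : Prop :=
  A ∈ I ∧ B ∈ I ∧ ∃ r ∈ P, r.head = A ∧ IForm.sat I r.body ∧ B ∈ IForm.Pnn r.body

/-- `P` is tight on `I`: there is no infinite sequence of elements of `I` in
which each element is followed by one of its parents. -/
def tightOn (P : IProg α) (I : Set α) : Prop :=
  ¬ ∃ f : ℕ → α, (∀ i, f i ∈ I) ∧ ∀ i, parent P I (f (i + 1)) (f i)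

end IProg
/-! ### Programs -/

/-- A literal: an atom `p(t₁,…,tₙ)` (`pos = true`) or such an atom preceded
by `not` (`pos = false`). -/
structure Lit (C O : Type) : Type where
  pos : Bool
  pred : C
  args : List (Term C O)

/-- A comparison `t₁ ≺ t₂`. -/
structure Comp (C O : Type) : Type where
  rel : Rel
  lhs : Term C O
  rhs : Term C O

/-- An element of the condition of an aggregate expression: a literal or comparison. -/
abbrev CondElem (C O : Type) := Lit C O ⊕ Comp C O

def Lit.varList {C O : Type} (l : Lit C O) : List ℕ := Term.varListL l.args
def Comp.varList {C O : Type} (c : Comp C O) : List ℕ := c.lhs.varList ++ c.rhs.varList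
def CondElem.varList {C O : Type} : CondElem C O → List ℕ :=
  Sum.elim Lit.varList Comp.varList

/-- An aggregate expression `α{t : C} ≺ s`, where `s` is a variable or a
precomputed term. -/
structure AggExpr (C O A : Type) : Type where
  name : A
  ts : List (Term C O)
  cond : List (CondElem C O)
  rel : Rel
  bound : ℕ ⊕ Pre C

def AggExpr.lhsVarList {C O A : Type} (E : AggExpr C O A) : List ℕ :=
  Term.varListL E.ts ++ E.cond.flatMap CondElem.varList

def boundVarList {C : Type} : ℕ ⊕ Pre C → List ℕ
  | .inl x => [x]
  | .inr _ => []

def AggExpr.varList {C O A : Type} (E : AggExpr C O A) : List ℕ :=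
  E.lhsVarList ++ boundVarList E.bound

/-- An aggregate expression is closed if its bound `s` is ground
(i.e., a precomputed term). -/
def AggExpr.ClosedBound {C O A : Type} (E : AggExpr C O A) : Prop :=
  ∃ r : Pre C, E.bound = Sum.inr r

/-- A conjunctive term of a rule body. -/
inductive BElem (C O A : Type) : Type where
  | lit (l : Lit C O)
  | comp (c : Comp C O)
  | agg (E : AggExpr C O A)

def BElem.varList {C O A : Type} : BElem C O A → List ℕ
  | .lit l => l.varList
  | .comp c => c.varList
  | .agg E => E.varList

/-- A body element suitable for the translation `τ`: a ground literal,
a ground comparison, or a closed aggregate expression. -/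
def BElem.ClosedC {C O A : Type} : BElem C O A → Prop
  | .lit l => l.varList = []
  | .comp c => c.varList = []
  | .agg E => E.ClosedBound

/-- The head of a rule. -/
inductive Head (C O : Type) : Type where
  | basic (p : C) (ts : List (Term C O))
  | choice (p : C) (ts : List (Term C O))
  | empty

def Head.varList {C O : Type} : Head C O → List ℕ
  | .basic _ ts => Term.varListL ts
  | .choice _ ts => Term.varListL ts
  | .empty => []

/-- A rule `Head ← Body`. -/
structure Rule (C O A : Type) : Type where
  head : Head C O
  body : List (BElem C O A)

def Rule.varList {C O A : Type} (R : Rule C O A) : List ℕ :=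
  R.head.varList ++ R.body.flatMap BElem.varList

/-- The variables with an occurrence in the rule outside the left-hand sides
`α{t : C}` of aggregate expressions (head, literal and comparison conjuncts,
and bounds of aggregate expressions); these are the global variables. -/
def Rule.globalList {C O A : Type} (R : Rule C O A) : List ℕ :=
  (R.head.varList ++ R.body.flatMap (fun b =>
    match b with
    | .lit l => l.varList
    | .comp c => c.varList
    | .agg E => boundVarList E.bound)).dedup

/-- The local variables of a rule: those occurring in the rule, all of whose
occurrences are inside left-hand sides of aggregate expressions of its body. -/
def Rule.localList {C O A : Type} (R : Rule C O A) : List ℕ :=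
  ((R.body.flatMap (fun b =>
    match b with
    | .agg E => E.lhsVarList
    | _ => [])).dedup).filter (fun x => x ∉ R.globalList)

/-- A rule is closed if all its variables are local. -/
def Rule.Closed {C O A : Type} (R : Rule C O A) : Prop := R.globalList = []

/-! ### Predicate symbol occurrences, vocabulary, dependency graph -/

def Lit.hasPred {C O : Type} (p : C) (n : ℕ) (l : Lit C O) : Prop :=
  l.pred = p ∧ l.args.length = n

def CondElem.hasPred {C O : Type} (p : C) (n : ℕ) : CondElem C O → Prop
  | .inl l => l.hasPred p n
  | .inr _ => False

def AggExpr.hasPred {C O A : Type} (p : C) (n : ℕ) (E : AggExpr C O A) : Prop :=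
  ∃ ce ∈ E.cond, CondElem.hasPred p n ce

/-- The predicate symbol `p/n` occurs in a body element. -/
def BElem.hasPred {C O A : Type} (p : C) (n : ℕ) : BElem C O A → Prop
  | .lit l => l.hasPred p n
  | .comp _ => False
  | .agg E => E.hasPred p n

/-- The predicate symbol `p/n` occurs in a positive literal or in an aggregate
expression (condition (ii′)). -/
def BElem.hasPosOrAggPred {C O A : Type} (p : C) (n : ℕ) : BElem C O A → Prop
  | .lit l => l.pos = true ∧ l.hasPred p n
  | .comp _ => False
  | .agg E => E.hasPred p n

def Head.hasPred {C O : Type} (p : C) (n : ℕ) : Head C O → Prop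
  | .basic q ts => q = p ∧ ts.length = n
  | .choice q ts => q = p ∧ ts.length = n
  | .empty => False

/-- The predicate symbol `p/n` occurs in the rule `R`. -/
def Rule.hasPredSym {C O A : Type} (p : C) (n : ℕ) (R : Rule C O A) : Prop :=
  R.head.hasPred p n ∨ ∃ e ∈ R.body, BElem.hasPred p n e

/-- The vocabulary of a program: all atoms `p(r)` with `r` a tuple of `n`
precomputed terms and `p/n` occurring in the program. -/
def vocab {C O A : Type} (Γ : Set (Rule C O A)) : Set (EGAtom C) :=
  {a | ∃ R ∈ Γ, Rule.hasPredSym a.1 a.2.length R}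

/-- The edge relation of the dependency graph `G_Γ` on predicate symbols. -/
def DepEdge {C O A : Type} (Γ : Set (Rule C O A)) (q p : C × ℕ) : Prop :=
  ∃ R ∈ Γ, R.head.hasPred q.1 q.2 ∧ ∃ e ∈ R.body, BElem.hasPosOrAggPred p.1 p.2 e

/-- A program is tight if its dependency graph is acyclic. -/
def EGTight {C O A : Type} (Γ : Set (Rule C O A)) : Prop :=
  ∀ s : C × ℕ, ¬ Relation.TransGen (DepEdge Γ) s s


/-! ### Embeddings and aggregate-freeness -/

mutual
/-- Embedding of precomputed terms into arguments of the extended language. -/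
def Pre.toAArg {C O A : Type} : Pre C → AArg C O A
  | .inf => .inf
  | .sup => .sup
  | .num n => .num n
  | .sym c => .sym c
  | .app f rs => .app f (Pre.toAArgL rs)

def Pre.toAArgL {C O A : Type} : List (Pre C) → List (AArg C O A)
  | [] => []
  | r :: rs => Pre.toAArg r :: Pre.toAArgL rs
end

mutual
/-- The number of occurrences of aggregate names in an argument;
an argument is aggregate-free iff this is `0`. -/
def AArg.countAgg {C O A : Type} : AArg C O A → ℕ
  | .num _ => 0
  | .sym _ => 0
  | .var _ => 0
  | .inf => 0
  | .sup => 0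
  | .app _ args => AArg.countAggL args
  | .agg _ _ F => F.countAgg + 1

def AArg.countAggL {C O A : Type} : List (AArg C O A) → ℕ
  | [] => 0
  | a :: as => a.countAgg + AArg.countAggL as

def AFml.countAgg {C O A : Type} : AFml C O A → ℕ
  | .atom _ args => AArg.countAggL args
  | .cmp _ a₁ a₂ => a₁.countAgg + a₂.countAgg
  | .mem a _ => a.countAgg
  | .bot => 0
  | .impl F G => F.countAgg + G.countAgg
  | .all _ F => F.countAgg
end

/-- An argument contains no aggregate names. -/
def AArg.AggFree {C O A : Type} (a : AArg C O A) : Prop := a.countAgg = 0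

mutual
/-- An aggregate-free argument, viewed as a term (the `agg` case is junk and
is never relevant for aggregate-free arguments). -/
def AArg.toTerm {C O A : Type} : AArg C O A → Term C O
  | .num n => .num n
  | .sym c => .sym c
  | .var x => .var x
  | .inf => .inf
  | .sup => .sup
  | .app f args => .app f (AArg.toTermL args)
  | .agg _ _ _ => .inf

def AArg.toTermL {C O A : Type} : List (AArg C O A) → List (Term C O)
  | [] => []
  | a :: as => a.toTerm :: AArg.toTermL as
end

/-! ### Abbreviated connectives of the extended first-order language -/

namespace AFml
variable {C O A : Type}

def negF (F : AFml C O A) : AFml C O A := .impl F .bot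
def topF : AFml C O A := negF .bot
def andF (F G : AFml C O A) : AFml C O A := .impl (.impl F (.impl G .bot)) .bot
def orF (F G : AFml C O A) : AFml C O A := .impl (negF F) G
def iffF (F G : AFml C O A) : AFml C O A := andF (.impl F G) (.impl G F)
def exF (x : ℕ) (F : AFml C O A) : AFml C O A := negF (.all x (negF F))
def andList (l : List (AFml C O A)) : AFml C O A := l.foldr andF topF
def orList (l : List (AFml C O A)) : AFml C O A := l.foldr orF .bot
def exList (xs : List ℕ) (F : AFml C O A) : AFml C O A := xs.foldr exF F
def allList (xs : List ℕ) (F : AFml C O A) : AFml C O A := xs.foldr .all F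

end AFml

/-! ### The translation φ (formula representations) -/

/-- A variable index strictly greater than every element of `l`
(used to pick new/fresh variables). -/
def freshVar (l : List ℕ) : ℕ := l.foldr max 0 + 1

/-- The bound `s` of an aggregate expression, as a term. -/
def boundTerm {C O : Type} : ℕ ⊕ Pre C → Term C O
  | .inl x => .var x
  | .inr r => r.toTerm

section Phi
variable {C O A : Type}

/-- `φ` of a literal: `∃X(X ∈ t ∧ p(X))`, resp. `∃X(X ∈ t ∧ ¬p(X))`,
with `X` a tuple of new variables. -/
def phiLit (l : Lit C O) : AFml C O A :=
  let n := freshVar l.varList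
  let ws := (List.range l.args.length).map (· + n)
  AFml.exList ws (AFml.andF
    (AFml.andList ((ws.zip l.args).map (fun q => AFml.mem (AArg.var q.1) q.2)))
    (if l.pos then AFml.atom l.pred (ws.map AArg.var)
     else AFml.negF (AFml.atom l.pred (ws.map AArg.var))))

/-- `φ` of a comparison: `∃X₁X₂(X₁ ∈ t₁ ∧ X₂ ∈ t₂ ∧ X₁ ≺ X₂)`. -/
def phiComp (c : Comp C O) : AFml C O A :=
  let n := freshVar c.varList
  AFml.exF n (AFml.exF (n + 1) (AFml.andF (AFml.mem (AArg.var n) c.lhs)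
    (AFml.andF (AFml.mem (AArg.var (n + 1)) c.rhs)
      (AFml.cmp c.rel (AArg.var n) (AArg.var (n + 1))))))

def phiCondElem : CondElem C O → AFml C O A :=
  Sum.elim phiLit phiComp

/-- `φ` of a conjunction of literals and comparisons. -/
def phiCond (cond : List (CondElem C O)) : AFml C O A :=
  AFml.andList (cond.map phiCondElem)

/-- `φ^X` of an aggregate expression `α{t : C} ≺ s` (with `X = xs` the
variables treated as local):
`∃Y(α{Z | ∃X(Z ∈ t ∧ φC)} ≺ Y ∧ Y ∈ s)`, with `Z`, `Y` new variables. -/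
def phiAgg (xs : List ℕ) (E : AggExpr C O A) : AFml C O A :=
  let n := freshVar (xs ++ E.varList)
  let zs := (List.range E.ts.length).map (· + (n + 1))
  AFml.exF n (AFml.andF
    (AFml.cmp E.rel
      (AArg.agg E.name zs
        (AFml.exList xs (AFml.andF
          (AFml.andList ((zs.zip E.ts).map (fun q => AFml.mem (AArg.var q.1) q.2)))
          (phiCond E.cond))))
      (AArg.var n))
    (AFml.mem (AArg.var n) (boundTerm E.bound)))

/-- `φ^X` of a body element, where `xs` is the list of variables treated as local. -/
def phiBElem (xs : List ℕ) : BElem C O A → AFml C O A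
  | .lit l => phiLit l
  | .comp c => phiComp c
  | .agg E => phiAgg xs E

/-- `φ^X` of a body (a conjunction of literals, comparisons and aggregate
expressions), where `xs` is the list of variables treated as local. -/
def phiBody (xs : List ℕ) (b : List (BElem C O A)) : AFml C O A :=
  AFml.andList (b.map (phiBElem xs))

/-- The formula representation of a constraint `← Body`: `¬ φ^X(Body)`,
where `X` is the list of local variables of the constraint. -/
def phiConstraintRep (R : Rule C O A) : AFml C O A :=
  AFml.negF (phiBody R.localList R.body)

/-- `V ∈ t` for a tuple `V` of variables and a tuple `t` of terms. -/
def memConj (Vs : List ℕ) (ts : List (Term C O)) : AFml C O A :=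
  AFml.andList ((Vs.zip ts).map (fun q => AFml.mem (AArg.var q.1) q.2))

/-- The antecedent `Fᵢ` of the formula representation `Fᵢ → p(V)` of a basic or
choice rule, where `Vs` is the chosen tuple `V` of new variables:
for a basic rule `V ∈ t ∧ φ^X(Body)`, for a choice rule
`V ∈ t ∧ φ^X(Body) ∧ p(V)`, with `X` the local variables of the rule. -/
def ruleAnte (Vs : List ℕ) (R : Rule C O A) : AFml C O A :=
  match R.head with
  | .basic _ ts => AFml.andF (memConj Vs ts) (phiBody R.localList R.body)
  | .choice p ts => AFml.andF (memConj Vs ts)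
      (AFml.andF (phiBody R.localList R.body) (AFml.atom p (Vs.map AArg.var)))
  | .empty => AFml.bot

/-- Does `R` belong to the definition of `p/n` (a basic or choice rule whose
head is of the form `p(t₁,…,tₙ)` or `{p(t₁,…,tₙ)}`)? -/
def definesB [DecidableEq C] (p : C) (n : ℕ) (R : Rule C O A) : Bool :=
  match R.head with
  | .basic q ts => decide (q = p ∧ ts.length = n)
  | .choice q ts => decide (q = p ∧ ts.length = n)
  | .empty => false

/-- The completed definition of the predicate symbol `p/n` in the finite
program `Γ`: `∀V(p(V) ↔ ⋁ᵢ ∃Uᵢ Fᵢ)`, where the `Fᵢ` come from the formula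
representations of the rules defining `p/n`, `V` is a tuple of new variables
chosen in the same way for all `i`, and `Uᵢ` is the list of free variables of
`Fᵢ` not in `V` (i.e., the global variables of the corresponding rule). -/
def completedDef [DecidableEq C] (Γ : List (Rule C O A)) (p : C) (n : ℕ) : AFml C O A :=
  let base := freshVar (Γ.flatMap Rule.varList)
  let Vs := (List.range n).map (· + base)
  AFml.allList Vs (AFml.iffF (AFml.atom p (Vs.map AArg.var))
    (AFml.orList ((Γ.filter (definesB p n)).map
      (fun R => AFml.exList R.globalList (ruleAnte Vs R)))))

end Phi

/-! ### The translation τ (grounding into infinitary formulas) -/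

section Tau
variable {C O A : Type}
variable (opFun : O → List ℤ → Option ℤ)
variable (aggFun : A → Set (List (Pre C)) → Pre C)
variable (lt : Pre C → Pre C → Prop)

/-- `τ` of a (ground instance of a) literal: `⋁_{r ∈ [t]} p(r)`, resp.
`⋁_{r ∈ [t]} ¬p(r)`; variables are evaluated by the valuation `v`. -/
def tauLit (v : Val C) (l : Lit C O) : IForm (EGAtom C) :=
  if l.pos then
    .disj {rs : List (Pre C) // Term.vals opFun v l.args rs}
      (fun rs => .atom (l.pred, rs.val))
  else
    .disj {rs : List (Pre C) // Term.vals opFun v l.args rs}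
      (fun rs => .neg (.atom (l.pred, rs.val)))

open Classical in
/-- `τ` of a (ground instance of a) comparison: `⊤` if the relation holds
between some values of the two terms, `⊥` otherwise. -/
noncomputable def tauComp (v : Val C) (c : Comp C O) : IForm (EGAtom C) :=
  if ∃ r₁ ∈ Term.val opFun v c.lhs, ∃ r₂ ∈ Term.val opFun v c.rhs,
      Rel.eval lt c.rel r₁ r₂
  then .top else .bot

noncomputable def tauCondElem (v : Val C) : CondElem C O → IForm (EGAtom C)
  | .inl l => tauLit opFun v l
  | .inr c => tauComp opFun lt v c

/-- `τ` of a conjunction of (ground instances of) literals and comparisons. -/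
noncomputable def tauCond (v : Val C) (cond : List (CondElem C O)) : IForm (EGAtom C) :=
  IForm.conjList (cond.map (tauCondElem opFun lt v))

/-- The value of the bound `s` of an aggregate expression under a valuation. -/
def boundVal (v : Val C) : ℕ ⊕ Pre C → Pre C
  | .inl x => v x
  | .inr r => r

/-- Tuples of precomputed terms matching the variable list `xs`. -/
def AggTuple (C : Type) (xs : List ℕ) : Type := {rs : List (Pre C) // rs.length = xs.length}

/-- `Δ` justifies the aggregate expression `E` (relative to the valuation `v`
and the list `xs` of its variables): `≺` holds between `α̂([Δ])` and `s`,
where `[Δ]` is the union of the value sets of the instantiated tuples `t`. -/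
def Justifies (v : Val C) (xs : List ℕ) (E : AggExpr C O A)
    (Δ : Set (AggTuple C xs)) : Prop :=
  Rel.eval lt E.rel
    (aggFun E.name
      {q | ∃ rs ∈ Δ, Term.vals opFun (updList v xs rs.val) E.ts q})
    (boundVal v E.bound)

/-- `τ` of a closed aggregate expression `E`, relative to the list `xs` of its
variables: the conjunction, over all subsets `Δ` of the set `A` of tuples of
precomputed terms matching `xs` that do not justify `E`, of the implications
`(⋀_{r∈Δ} τ(C^X_r)) → (⋁_{r∈A∖Δ} τ(C^X_r))`. -/
noncomputable def tauAgg (v : Val C) (xs : List ℕ) (E : AggExpr C O A) :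
    IForm (EGAtom C) :=
  .conj {Δ : Set (AggTuple C xs) // ¬ Justifies opFun aggFun lt v xs E Δ}
    (fun Δ => .impl
      (.conj {rs : AggTuple C xs // rs ∈ Δ.val}
        (fun rs => tauCond opFun lt (updList v xs rs.val.val) E.cond))
      (.disj {rs : AggTuple C xs // rs ∉ Δ.val}
        (fun rs => tauCond opFun lt (updList v xs rs.val.val) E.cond)))

/-- `τ` of a closed aggregate expression, with `X` the list of variables
occurring in it. -/
noncomputable def tauAggE (v : Val C) (E : AggExpr C O A) : IForm (EGAtom C) :=
  tauAgg opFun aggFun lt v (E.varList.dedup) E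

/-- `τ` of a body element of (an instance of) a rule whose list of local
variables is `loc`; in the instance, the variables occurring in an aggregate
expression `E` are the variables of `E` that are local in the rule. -/
noncomputable def tauBElem (v : Val C) (loc : List ℕ) : BElem C O A → IForm (EGAtom C)
  | .lit l => tauLit opFun v l
  | .comp c => tauComp opFun lt v c
  | .agg E => tauAgg opFun aggFun lt v (E.varList.dedup.filter (· ∈ loc)) E

/-- `τ` of the body of (an instance of) a rule with local variable list `loc`. -/
noncomputable def tauBody (v : Val C) (loc : List ℕ) (b : List (BElem C O A)) :
    IForm (EGAtom C) :=
  IForm.conjList (b.map (tauBElem opFun aggFun lt v loc))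

/-- `τ` of (an instance, given by the valuation `v`, of) a rule. -/
noncomputable def tauRule (v : Val C) (R : Rule C O A) : IForm (EGAtom C) :=
  match R.head with
  | .basic p ts => .impl (tauBody opFun aggFun lt v R.localList R.body)
      (.conj {rs : List (Pre C) // Term.vals opFun v ts rs}
        (fun rs => .atom (p, rs.val)))
  | .choice p ts => .impl (tauBody opFun aggFun lt v R.localList R.body)
      (.conj {rs : List (Pre C) // Term.vals opFun v ts rs}
        (fun rs => .or (.atom (p, rs.val)) (.neg (.atom (p, rs.val)))))
  | .empty => .neg (tauBody opFun aggFun lt v R.localList R.body)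

/-- `τΓ`: the conjunction of `τR` over all instances `R` of the rules of `Γ`
(instances given by valuations of the global variables). -/
noncomputable def tauProg (Γ : Set (Rule C O A)) : IForm (EGAtom C) :=
  .conj ({R : Rule C O A // R ∈ Γ} × Val C)
    (fun z => tauRule opFun aggFun lt z.2 z.1.val)

/-- Stable models of an EG program: stable models of `τΓ`. -/
noncomputable def EGStable (I : Interp C) (Γ : Set (Rule C O A)) : Prop :=
  IForm.stable I (tauProg opFun aggFun lt Γ)

/-- The infinitary program `τ₁Γ`: the rules `τ(Body) → p(r)` for all instances
of basic rules of `Γ` and all `r ∈ [t]`, together with the rules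
`τ(Body) ∧ ¬¬p(r) → p(r)` for all instances of choice rules and all `r ∈ [t]`. -/
noncomputable def tau1 (Γ : Set (Rule C O A)) : IProg (EGAtom C) :=
  {ir | ∃ R ∈ Γ, ∃ v : Val C,
    (∃ p ts rs, R.head = Head.basic p ts ∧ Term.vals opFun v ts rs ∧
      ir = ⟨tauBody opFun aggFun lt v R.localList R.body, (p, rs)⟩) ∨
    (∃ p ts rs, R.head = Head.choice p ts ∧ Term.vals opFun v ts rs ∧
      ir = ⟨IForm.and (tauBody opFun aggFun lt v R.localList R.body)
              (IForm.neg (IForm.neg (IForm.atom (p, rs)))), (p, rs)⟩)}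

/-- The infinitary formula `τ₂Γ`: the conjunction of `¬τ(C)` over all
instances `← C` of the constraints of `Γ`. -/
noncomputable def tau2 (Γ : Set (Rule C O A)) : IForm (EGAtom C) :=
  .conj ({R : Rule C O A // R ∈ Γ ∧ R.head = Head.empty} × Val C)
    (fun z => .neg (tauBody opFun aggFun lt z.2 z.1.val.localList z.1.val.body))

/-- `τ` of a closed conjunction of ground literals, ground comparisons and
closed aggregate expressions (each aggregate expression translated relative
to the list of its own variables). -/
noncomputable def tauBElemC (v : Val C) : BElem C O A → IForm (EGAtom C)
  | .lit l => tauLit opFun v l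
  | .comp c => tauComp opFun lt v c
  | .agg E => tauAggE opFun aggFun lt v E

noncomputable def tauBodyC (v : Val C) (b : List (BElem C O A)) : IForm (EGAtom C) :=
  IForm.conjList (b.map (tauBElemC opFun aggFun lt v))

end Tau

/-! ### Completion of an EG program -/

section Completion
variable {C O A : Type}
variable (opFun : O → List ℤ → Option ℤ)
variable (aggFun : A → Set (List (Pre C)) → Pre C)
variable (lt : Pre C → Pre C → Prop)

/-- `I` satisfies the completion of the finite program `Γ`: the completed
definitions of all predicate symbols occurring in `Γ` together with the
universal closures of the formula representations of all constraints of `Γ`. -/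
def SatCompletion [DecidableEq C] (Γ : List (Rule C O A)) (I : Interp C) : Prop :=
  (∀ (p : C) (n : ℕ), (∃ R ∈ Γ, Rule.hasPredSym p n R) →
    ∀ v : Val C, AFml.sat opFun aggFun lt I v (completedDef Γ p n)) ∧
  (∀ R ∈ Γ, R.head = Head.empty →
    ∀ v : Val C, AFml.sat opFun aggFun lt I v (phiConstraintRep R))

end Completion


/-!
A stable model `I` of `τΓ` is a model of `τΓ`, and it is supported: for `a ∈ I` the
interpretation `I ∖ {a}` must violate the reduct `(τΓ)^I`, and the reduct of an instance of a
rule can only fail there if the body of the instance holds in `I` and `a` is one of its head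
atoms. On the syntactic side, `φ^X` of a body holds under a valuation exactly when `τ` of the
corresponding instance does; for an aggregate expression the point is that the tuples
satisfying `∃X(Z ∈ t ∧ φC)` are the values of `t` at the tuples of `X` whose condition holds,
while `τ` of the aggregate expression holds exactly when the set of those tuples justifies it.
Since `τ(Body)` depends only on the global variables, the disjunct `∃Uᵢ Fᵢ` of the completed
definition of `p/n` holds at `V = r` iff some instance of the `i`-th rule has a true body and `r`
among its head values (and, for a choice rule, `p(r) ∈ I`). So the completed definitions say
that `I` is a supported model, and the constraints hold because `I` satisfies `¬τ(Body)` for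
all their instances.
-/

namespace IForm

variable {α : Type} {I J : Set α}

theorem sat_reduct_iff {F : IForm α} : sat I (reduct I F) ↔ sat I F := by
  induction F with
  | atom a => by_cases h : a ∈ I <;> simp [reduct, sat, h]
  | bot => rfl
  | conj ι f ih => simp only [reduct, sat, ih]
  | disj ι f ih => simp only [reduct, sat, ih]
  | impl F G ihF ihG =>
      by_cases h : sat I (impl F G)
      · rw [reduct, if_pos h]
        exact ⟨fun _ => h, fun _ hF => ihG.2 (h (ihF.1 hF))⟩
      · rw [reduct, if_neg h]
        exact iff_of_false id h

theorem sat_of_sat_reduct {F : IForm α} : sat J (reduct I F) → sat I F := by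
  induction F with
  | atom a => by_cases h : a ∈ I <;> simp [reduct, sat, h]
  | bot => exact id
  | conj ι f ih => exact fun h i => ih i (h i)
  | disj ι f ih => exact fun ⟨i, hi⟩ => ⟨i, ih i hi⟩
  | impl F G _ _ =>
      by_cases h : sat I (impl F G)
      · exact fun _ => h
      · rw [reduct, if_neg h]
        exact False.elim

theorem sat_reduct_atom (hJI : J ⊆ I) (a : α) : sat J (reduct I (atom a)) ↔ a ∈ J := by
  by_cases h : a ∈ I <;> simp [reduct, sat, h]
  exact fun haJ => h (hJI haJ)

theorem sat_reduct_impl_of_sat {F G : IForm α} (h : sat I (impl F G)) :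
    sat J (reduct I (impl F G)) ↔ (sat J (reduct I F) → sat J (reduct I G)) := by
  rw [reduct, if_pos h]
  rfl

theorem sat_reduct_or_neg (a : α) :
    sat J (reduct I (or (atom a) (neg (atom a)))) ↔ (a ∈ I → a ∈ J) := by
  by_cases h : a ∈ I <;> simp [or, neg, reduct, sat, h]

theorem sat_conjList {L : List (IForm α)} : sat I (conjList L) ↔ ∀ F ∈ L, sat I F :=
  ⟨fun h F hF => by obtain ⟨i, rfl⟩ := List.get_of_mem hF; exact h i,
    fun h i => h _ (List.get_mem L i)⟩

theorem stable.sat {F : IForm α} (h : stable I F) : sat I F :=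
  sat_reduct_iff.1 h.1

theorem stable.exists_not_sat_reduct_diff {ι : Type} {f : ι → IForm α}
    (h : stable I (conj ι f)) {a : α} (ha : a ∈ I) :
    ∃ i, ¬ IForm.sat (I \ {a}) (reduct I (f i)) := by
  by_contra! hall
  have hdiff : I \ {a} = I := h.2 _ Set.sdiff_subset (by rw [reduct]; exact hall)
  exact (hdiff.symm ▸ ha : a ∈ I \ {a}).2 rfl

end IForm

variable {C O A : Type} {opFun : O → List ℤ → Option ℤ}
  {aggFun : A → Set (List (Pre C)) → Pre C} {lt : Pre C → Pre C → Prop}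

local notation:50 I " ⊨[" v "] " F => AFml.sat opFun aggFun lt I v F

variable (opFun aggFun lt) in
def InstanceSupports (I : Interp C) (R : Rule C O A) (a : EGAtom C) : Prop :=
  ∃ v : Val C, IForm.sat I (tauBody opFun aggFun lt v R.localList R.body) ∧
    ∃ ts, (R.head = .basic a.1 ts ∨ R.head = .choice a.1 ts) ∧ Term.vals opFun v ts a.2

section StableModels

variable {Γ : Set (Rule C O A)} {I : Interp C}

theorem EGStable.sat_tauRule (h : EGStable opFun aggFun lt I Γ) {R : Rule C O A} (hR : R ∈ Γ)
    (v : Val C) : IForm.sat I (tauRule opFun aggFun lt v R) :=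
  h.sat ⟨⟨R, hR⟩, v⟩

theorem EGStable.not_sat_tauBody (h : EGStable opFun aggFun lt I Γ) {R : Rule C O A}
    (hR : R ∈ Γ) (hempty : R.head = .empty) (v : Val C) :
    ¬ IForm.sat I (tauBody opFun aggFun lt v R.localList R.body) := by
  have hrule := h.sat_tauRule hR v
  rw [tauRule, hempty] at hrule
  exact hrule

theorem exists_head_of_not_sat_reduct_tauRule {J : Interp C} (hJI : J ⊆ I) {v : Val C}
    {R : Rule C O A} (hI : IForm.sat I (tauRule opFun aggFun lt v R))
    (hJ : ¬ IForm.sat J (IForm.reduct I (tauRule opFun aggFun lt v R))) :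
    IForm.sat I (tauBody opFun aggFun lt v R.localList R.body) ∧
      ∃ p ts rs, (R.head = .basic p ts ∨ R.head = .choice p ts) ∧
        Term.vals opFun v ts rs ∧ (p, rs) ∈ I ∧ (p, rs) ∉ J := by
  rcases hhead : R.head with ⟨p, ts⟩ | ⟨p, ts⟩ | _ <;>
    simp only [tauRule, hhead] at hI hJ
  case empty =>
    refine (hJ ?_).elim
    rw [IForm.neg, IForm.sat_reduct_impl_of_sat hI]
    exact fun hbody => hI (IForm.sat_of_sat_reduct hbody)
  all_goals
    rw [IForm.sat_reduct_impl_of_sat hI, Classical.not_imp, IForm.reduct] at hJ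
    obtain ⟨hbodyJ, hhd⟩ := hJ
    have hbody := IForm.sat_of_sat_reduct hbodyJ
    obtain ⟨rs, hrs⟩ := not_forall.1 hhd
  · rw [IForm.sat_reduct_atom hJI] at hrs
    exact ⟨hbody, p, ts, rs, .inl rfl, rs.2, hI hbody rs, hrs⟩
  · rw [IForm.sat_reduct_or_neg, Classical.not_imp] at hrs
    exact ⟨hbody, p, ts, rs, .inr rfl, rs.2, hrs⟩

theorem EGStable.supported (h : EGStable opFun aggFun lt I Γ) {a : EGAtom C} (ha : a ∈ I) :
    ∃ R ∈ Γ, InstanceSupports opFun aggFun lt I R a := by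
  obtain ⟨⟨⟨R, hR⟩, v⟩, hfail⟩ := h.exists_not_sat_reduct_diff ha
  obtain ⟨hbody, p, ts, rs, hhead, hvals, hmem, hnotMem⟩ :=
    exists_head_of_not_sat_reduct_tauRule Set.sdiff_subset (h.sat_tauRule hR v) hfail
  obtain rfl : (p, rs) = a := by_contra fun hne => hnotMem ⟨hmem, hne⟩
  exact ⟨R, hR, v, hbody, ts, hhead, hvals⟩

end StableModels

section Valuations

def EqOff (xs : List ℕ) (u w : Val C) : Prop := ∀ y, y ∉ xs → u y = w y

theorem updList_apply_of_notMem (v : Val C) :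
    ∀ (xs : List ℕ) (rs : List (Pre C)) {y : ℕ}, y ∉ xs → updList v xs rs y = v y
  | [], _, _, _ => rfl
  | _ :: _, [], _, _ => rfl
  | x :: xs, r :: rs, y, h => by
      rw [List.mem_cons, not_or] at h
      rw [updList, Function.update_of_ne h.1, updList_apply_of_notMem v xs rs h.2]

theorem eqOff_updList (v : Val C) (xs : List ℕ) (rs : List (Pre C)) :
    EqOff xs v (updList v xs rs) := fun _ hy => (updList_apply_of_notMem v xs rs hy).symm

theorem updList_apply_congr {u w : Val C} :
    ∀ (xs : List ℕ) (rs : List (Pre C)), rs.length = xs.length →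
      ∀ y, (y ∈ xs ∨ u y = w y) → updList u xs rs y = updList w xs rs y
  | [], [], _, _, h => h.resolve_left List.not_mem_nil
  | x :: xs, r :: rs, hlen, y, h => by
      by_cases hyx : y = x
      · subst hyx
        rw [updList, updList, Function.update_self, Function.update_self]
      · rw [updList, updList, Function.update_of_ne hyx, Function.update_of_ne hyx]
        refine updList_apply_congr xs rs (by simpa using hlen) y ?_
        simpa [hyx] using h

theorem map_updList_self (v : Val C) :
    ∀ (xs : List ℕ), xs.Nodup → ∀ (rs : List (Pre C)), rs.length = xs.length →
      xs.map (updList v xs rs) = rs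
  | [], _, [], _ => rfl
  | x :: xs, hnd, r :: rs, hlen => by
      rw [List.nodup_cons] at hnd
      rw [List.map_cons, updList, Function.update_self, List.map_congr_left (g := updList v xs rs)
        fun y hy => Function.update_of_ne (fun hyx : y = x => hnd.1 (hyx ▸ hy)) _ _,
        map_updList_self v xs hnd.2 rs (by simpa using hlen)]

theorem updList_map_apply_of_mem (v u : Val C) :
    ∀ (xs : List ℕ), xs.Nodup → ∀ y ∈ xs, updList v xs (xs.map u) y = u y
  | x :: xs, hnd, y, hy => by
      rw [List.nodup_cons] at hnd
      rw [List.map_cons, updList]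
      by_cases hyx : y = x
      · subst hyx; rw [Function.update_self]
      · rw [Function.update_of_ne hyx]
        exact updList_map_apply_of_mem v u xs hnd.2 y ((List.mem_cons.1 hy).resolve_left hyx)

theorem updList_map_eq_of_eqOff {u w : Val C} {xs : List ℕ} (hxs : xs.Nodup)
    (hw : EqOff xs u w) : updList u xs (xs.map w) = w := by
  funext y
  by_cases hy : y ∈ xs
  · exact updList_map_apply_of_mem u w xs hxs y hy
  · rw [updList_apply_of_notMem u xs _ hy, hw y hy]

theorem lt_freshVar {l : List ℕ} {x : ℕ} (hx : x ∈ l) : x < freshVar l :=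
  Nat.lt_succ_of_le (List.le_max_of_le' 0 hx le_rfl)

theorem le_of_mem_map_add_range {k n w : ℕ} (hw : w ∈ (List.range k).map (· + n)) :
    n ≤ w := by
  obtain ⟨i, -, rfl⟩ := List.mem_map.1 hw
  omega

theorem nodup_map_add_range (k n : ℕ) : ((List.range k).map (· + n)).Nodup :=
  List.nodup_range.map fun _ _ h => by omega

end Valuations

namespace AFml

variable {I : Interp C} {v : Val C} {F G : AFml C O A}

theorem sat_negF : (I ⊨[v] negF F) ↔ ¬ (I ⊨[v] F) := Iff.rfl

theorem sat_andF : (I ⊨[v] andF F G) ↔ (I ⊨[v] F) ∧ (I ⊨[v] G) := by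
  simp only [andF, sat]
  tauto

theorem sat_orF : (I ⊨[v] orF F G) ↔ (I ⊨[v] F) ∨ (I ⊨[v] G) := by
  simp only [orF, negF, sat]
  tauto

theorem sat_iffF : (I ⊨[v] iffF F G) ↔ ((I ⊨[v] F) ↔ (I ⊨[v] G)) := by
  simp only [iffF, sat_andF, sat]
  tauto

theorem sat_andList {L : List (AFml C O A)} : (I ⊨[v] andList L) ↔ ∀ F ∈ L, I ⊨[v] F := by
  induction L with
  | nil => simp [andList, topF, sat_negF, sat]
  | cons F L ih => simp only [andList, List.foldr_cons] at ih ⊢; simp [sat_andF, ih]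

theorem sat_orList {L : List (AFml C O A)} : (I ⊨[v] orList L) ↔ ∃ F ∈ L, I ⊨[v] F := by
  induction L with
  | nil => simp [orList, sat]
  | cons F L ih => simp only [orList, List.foldr_cons] at ih ⊢; simp [sat_orF, ih]

theorem sat_exF {x : ℕ} : (I ⊨[v] exF x F) ↔ ∃ r, I ⊨[Function.update v x r] F := by
  simp only [exF, sat_negF, sat, not_forall, not_not]

theorem sat_exList {xs : List ℕ} :
    (I ⊨[v] exList xs F) ↔ ∃ w, EqOff xs v w ∧ I ⊨[w] F := by
  induction xs generalizing v with
  | nil => exact ⟨fun h => ⟨v, fun _ _ => rfl, h⟩,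
      fun ⟨w, hw, h⟩ => (funext fun y => hw y List.not_mem_nil : v = w) ▸ h⟩
  | cons x xs ih =>
      change (I ⊨[v] exF x (exList xs F)) ↔ _
      simp only [sat_exF, ih]
      constructor
      · rintro ⟨r, w, hw, h⟩
        refine ⟨w, fun y hy => ?_, h⟩
        rw [List.mem_cons, not_or] at hy
        rw [← hw y hy.2, Function.update_of_ne hy.1]
      · rintro ⟨w, hw, h⟩
        refine ⟨w x, w, fun y hy => ?_, h⟩
        by_cases hyx : y = x
        · subst hyx; rw [Function.update_self]
        · rw [Function.update_of_ne hyx]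
          exact hw y (by simp [hyx, hy])

theorem sat_allList {xs : List ℕ} :
    (I ⊨[v] allList xs F) ↔ ∀ w, EqOff xs v w → I ⊨[w] F := by
  induction xs generalizing v with
  | nil => exact ⟨fun h w hw => (funext fun y => hw y List.not_mem_nil : v = w) ▸ h,
      fun h => h v fun _ _ => rfl⟩
  | cons x xs ih =>
      change (∀ r, I ⊨[Function.update v x r] allList xs F) ↔ _
      simp only [ih]
      constructor
      · intro h w hw
        refine h (w x) w fun y hy => ?_
        by_cases hyx : y = x
        · subst hyx; rw [Function.update_self]
        · rw [Function.update_of_ne hyx]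
          exact hw y (by simp [hyx, hy])
      · intro h r w hw
        refine h w fun y hy => ?_
        rw [List.mem_cons, not_or] at hy
        rw [← hw y hy.2, Function.update_of_ne hy.1]

end AFml

section Terms

mutual
theorem Term.val_congr {u w : Val C} :
    ∀ t : Term C O, (∀ x ∈ t.varList, u x = w x) → Term.val opFun u t = Term.val opFun w t
  | .num _, _ | .sym _, _ | .inf, _ | .sup, _ => rfl
  | .var x, h => by rw [Term.val, Term.val, h x (by simp [Term.varList])]
  | .app f ts, h => by
      rw [Term.val, Term.val]
      ext r
      exact exists_congr fun rs =>
        and_congr_left' (Term.vals_congr ts (by simpa [Term.varList] using h) rs)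
  | .op o ts, h => by
      rw [Term.val, Term.val]
      ext r
      exact exists_congr fun ks =>
        and_congr_left' (Term.vals_congr ts (by simpa [Term.varList] using h) _)
  | .interval t₁ t₂, h => by
      rw [Term.val, Term.val,
        Term.val_congr t₁ fun x hx => h x (by simp [Term.varList, hx]),
        Term.val_congr t₂ fun x hx => h x (by simp [Term.varList, hx])]

theorem Term.vals_congr {u w : Val C} :
    ∀ ts : List (Term C O), (∀ x ∈ Term.varListL ts, u x = w x) →
      ∀ rs, (Term.vals opFun u ts rs ↔ Term.vals opFun w ts rs)
  | [], _, _ => Iff.rfl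
  | t :: ts, h, _ => by
      rw [Term.vals, Term.vals]
      refine exists_congr fun r => exists_congr fun rs' => and_congr_right fun _ => ?_
      rw [Term.val_congr t fun x hx => h x (by simp [Term.varListL, hx]),
        Term.vals_congr ts (fun x hx => h x (by simp [Term.varListL, hx])) rs']
end

theorem Term.vals_iff {u : Val C} :
    ∀ (ts : List (Term C O)) (rs : List (Pre C)), Term.vals opFun u ts rs ↔
      rs.length = ts.length ∧ ∀ q ∈ rs.zip ts, q.1 ∈ Term.val opFun u q.2
  | [], rs => by simp [Term.vals, List.length_eq_zero_iff]
  | t :: ts, [] => by simp [Term.vals]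
  | t :: ts, r :: rs => by simp [Term.vals, Term.vals_iff ts rs, and_left_comm]

theorem Term.vals_length {u : Val C} {ts : List (Term C O)} {rs : List (Pre C)}
    (h : Term.vals opFun u ts rs) : rs.length = ts.length :=
  ((Term.vals_iff ts rs).1 h).1

theorem Term.vals_map_iff {u u' : Val C} {ws : List ℕ} {ts : List (Term C O)}
    (hlen : ws.length = ts.length) :
    Term.vals opFun u' ts (ws.map u) ↔ ∀ q ∈ ws.zip ts, u q.1 ∈ Term.val opFun u' q.2 := by
  simp only [Term.vals_iff, List.length_map, hlen, List.zip_map_left, List.forall_mem_map,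
    true_and, Prod.map_fst, Prod.map_snd, id]

mutual
theorem Pre.val_toTerm (v : Val C) :
    ∀ r : Pre C, Term.val opFun v (Pre.toTerm r : Term C O) = {r}
  | .inf | .sup | .num _ | .sym _ => rfl
  | .app f rs => by
      ext r'
      simp only [Pre.toTerm, Term.val, Set.mem_ofPred_eq, Set.mem_singleton_iff,
        Pre.vals_toTermL v rs, exists_eq_left]

theorem Pre.vals_toTermL (v : Val C) :
    ∀ rs rs' : List (Pre C),
      Term.vals opFun v (Pre.toTermL rs : List (Term C O)) rs' ↔ rs' = rs
  | [], rs' => by rw [Pre.toTermL, Term.vals]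
  | r :: rs, rs' => by
      simp only [Pre.toTermL, Term.vals, Pre.val_toTerm v r, Set.mem_singleton_iff,
        Pre.vals_toTermL v rs]
      constructor
      · rintro ⟨_, _, rfl, rfl, rfl⟩; rfl
      · rintro rfl; exact ⟨r, rs, rfl, rfl, rfl⟩
end

theorem AArg.evalL_map_var {I : Interp C} (v : Val C) :
    ∀ L : List ℕ, AArg.evalL opFun aggFun lt I v (L.map AArg.var) = L.map v
  | [] => rfl
  | x :: L => by rw [List.map_cons, AArg.evalL, AArg.eval, List.map_cons, AArg.evalL_map_var v L]

end Terms

section Tau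

variable {I : Interp C}

theorem sat_tauLit {u : Val C} {l : Lit C O} :
    IForm.sat I (tauLit opFun u l) ↔ ∃ rs, Term.vals opFun u l.args rs ∧
      if l.pos then (l.pred, rs) ∈ I else (l.pred, rs) ∉ I := by
  cases hpos : l.pos <;> simp [tauLit, hpos, IForm.sat, IForm.neg]

theorem sat_tauComp {u : Val C} {c : Comp C O} :
    IForm.sat I (tauComp opFun lt u c) ↔ ∃ r₁ ∈ Term.val opFun u c.lhs,
      ∃ r₂ ∈ Term.val opFun u c.rhs, Rel.eval lt c.rel r₁ r₂ := by
  unfold tauComp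
  split_ifs with h
  · exact iff_of_true isEmptyElim h
  · exact iff_of_false id h

theorem tauLit_congr {u w : Val C} (l : Lit C O) (h : ∀ x ∈ l.varList, u x = w x) :
    tauLit opFun u l = tauLit opFun w l := by
  rw [tauLit, tauLit, funext fun rs => propext (Term.vals_congr l.args h rs)]

theorem tauComp_congr {u w : Val C} (c : Comp C O) (h : ∀ x ∈ c.varList, u x = w x) :
    tauComp opFun lt u c = tauComp opFun lt w c := by
  rw [tauComp, tauComp, Term.val_congr c.lhs fun x hx => h x (by simp [Comp.varList, hx]),
    Term.val_congr c.rhs fun x hx => h x (by simp [Comp.varList, hx])]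

theorem tauCond_congr {u w : Val C} (cond : List (CondElem C O))
    (h : ∀ x ∈ cond.flatMap CondElem.varList, u x = w x) :
    tauCond opFun lt u cond = tauCond opFun lt w cond := by
  rw [tauCond, tauCond, List.map_congr_left fun ce hce => ?_]
  have hce : ∀ x ∈ CondElem.varList ce, u x = w x :=
    fun x hx => h x (List.mem_flatMap.2 ⟨ce, hce, hx⟩)
  cases ce with
  | inl l => exact tauLit_congr l hce
  | inr c => exact tauComp_congr c hce

theorem sat_tauCond {v : Val C} {cond : List (CondElem C O)} :
    IForm.sat I (tauCond opFun lt v cond) ↔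
      ∀ ce ∈ cond, IForm.sat I (tauCondElem opFun lt v ce) := by
  simp only [tauCond, IForm.sat_conjList, List.forall_mem_map]

theorem sat_tauAgg {v : Val C} {xs : List ℕ} {E : AggExpr C O A} :
    IForm.sat I (tauAgg opFun aggFun lt v xs E) ↔ Justifies opFun aggFun lt v xs E
      {rs | IForm.sat I (tauCond opFun lt (updList v xs rs.val) E.cond)} := by
  set Δsat : Set (AggTuple C xs) :=
    {rs | IForm.sat I (tauCond opFun lt (updList v xs rs.val) E.cond)}
  simp only [tauAgg, IForm.sat]
  constructor
  · intro h
    by_contra hnj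
    obtain ⟨rs, hrs⟩ := h ⟨Δsat, hnj⟩ fun rs => rs.2
    exact rs.2 hrs
  · rintro hj ⟨Δ, hΔ⟩ hsub
    obtain ⟨rs, hrs, hnotMem⟩ : ∃ rs ∈ Δsat, rs ∉ Δ := by
      by_contra! hc
      have hΔsat : Δ = Δsat := Set.Subset.antisymm (fun rs hrs => hsub ⟨rs, hrs⟩) hc
      exact hΔ (hΔsat ▸ hj)
    exact ⟨⟨rs, hnotMem⟩, hrs⟩

end Tau

section Variables

variable {R : Rule C O A} {x : ℕ}

theorem Rule.mem_globalList_of_head (hx : x ∈ R.head.varList) : x ∈ R.globalList := by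
  simp [Rule.globalList, hx]

theorem Rule.mem_globalList_of_lit {l : Lit C O} (he : .lit l ∈ R.body) (hx : x ∈ l.varList) :
    x ∈ R.globalList := by
  simp only [Rule.globalList, List.mem_dedup, List.mem_append, List.mem_flatMap]
  exact .inr ⟨_, he, hx⟩

theorem Rule.mem_globalList_of_comp {c : Comp C O} (he : .comp c ∈ R.body)
    (hx : x ∈ c.varList) : x ∈ R.globalList := by
  simp only [Rule.globalList, List.mem_dedup, List.mem_append, List.mem_flatMap]
  exact .inr ⟨_, he, hx⟩

theorem Rule.mem_globalList_of_bound {E : AggExpr C O A} (he : .agg E ∈ R.body)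
    (hx : x ∈ boundVarList E.bound) : x ∈ R.globalList := by
  simp only [Rule.globalList, List.mem_dedup, List.mem_append, List.mem_flatMap]
  exact .inr ⟨_, he, hx⟩

theorem Rule.mem_globalList_of_agg {E : AggExpr C O A} (he : .agg E ∈ R.body)
    (hx : x ∈ E.varList) (hloc : x ∉ R.localList) : x ∈ R.globalList := by
  rcases List.mem_append.1 hx with hx | hx
  · by_contra hglob
    refine hloc (List.mem_filter.2 ⟨List.mem_dedup.2 (List.mem_flatMap.2 ⟨_, he, hx⟩), ?_⟩)
    simpa using hglob
  · exact Rule.mem_globalList_of_bound he hx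

theorem Rule.mem_varList_of_mem_globalList (hx : x ∈ R.globalList) : x ∈ R.varList := by
  simp only [Rule.globalList, List.mem_dedup, List.mem_append, List.mem_flatMap] at hx
  rcases hx with hx | ⟨b, hb, hxb⟩
  · exact List.mem_append_left _ hx
  · refine List.mem_append_right _ (List.mem_flatMap.2 ⟨b, hb, ?_⟩)
    cases b with
    | lit | comp => exact hxb
    | agg E => exact List.mem_append_right _ hxb

theorem AggExpr.mem_varList_of_ts {E : AggExpr C O A} (hx : x ∈ Term.varListL E.ts) :
    x ∈ E.varList := by
  simp [AggExpr.varList, AggExpr.lhsVarList, hx]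

theorem AggExpr.mem_varList_of_cond {E : AggExpr C O A}
    (hx : x ∈ E.cond.flatMap CondElem.varList) : x ∈ E.varList := by
  simp only [AggExpr.varList, AggExpr.lhsVarList, List.mem_append]
  exact .inl (.inr hx)

theorem mem_filter_dedup_iff {α : Type} [DecidableEq α] {l loc : List α} {a : α} :
    a ∈ l.dedup.filter (· ∈ loc) ↔ a ∈ l ∧ a ∈ loc := by
  simp

end Variables

section PhiTau

variable {I : Interp C}

theorem sat_mem_var {v : Val C} {x : ℕ} {t : Term C O} :
    (I ⊨[v] AFml.mem (AArg.var x) t) ↔ v x ∈ Term.val opFun v t := Iff.rfl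

theorem sat_atom_vars {v : Val C} {p : C} {ws : List ℕ} :
    (I ⊨[v] AFml.atom p (ws.map AArg.var)) ↔ (p, ws.map v) ∈ I := by
  rw [AFml.sat, AArg.evalL_map_var]

theorem sat_memConj {u : Val C} {Vs : List ℕ} {ts : List (Term C O)}
    (hlen : Vs.length = ts.length) :
    (I ⊨[u] (memConj Vs ts : AFml C O A)) ↔ Term.vals opFun u ts (Vs.map u) := by
  simp only [memConj, AFml.sat_andList, List.forall_mem_map, sat_mem_var,
    Term.vals_map_iff hlen]

theorem sat_exList_memConj_andF {u : Val C} {ws : List ℕ} {ts : List (Term C O)}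
    {G : AFml C O A} (hnd : ws.Nodup) (hlen : ws.length = ts.length)
    (hfresh : ∀ x ∈ Term.varListL ts, x ∉ ws) :
    (I ⊨[u] AFml.exList ws (AFml.andF (memConj ws ts) G)) ↔
      ∃ rs, Term.vals opFun u ts rs ∧ I ⊨[updList u ws rs] G := by
  rw [AFml.sat_exList]
  constructor
  · rintro ⟨w, hw, hsat⟩
    rw [AFml.sat_andF, sat_memConj hlen] at hsat
    refine ⟨ws.map w, (Term.vals_congr ts (fun x hx => hw x (hfresh x hx)) _).2 hsat.1, ?_⟩
    rw [updList_map_eq_of_eqOff hnd hw]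
    exact hsat.2
  · rintro ⟨rs, hvals, hsat⟩
    have hrs : ws.map (updList u ws rs) = rs :=
      map_updList_self u ws hnd rs ((Term.vals_length hvals).trans hlen.symm)
    refine ⟨_, eqOff_updList u ws rs, AFml.sat_andF.2 ⟨?_, hsat⟩⟩
    rw [sat_memConj hlen, hrs]
    exact (Term.vals_congr ts (fun x hx => (updList_apply_of_notMem u ws rs (hfresh x hx)).symm)
      rs).1 hvals

theorem sat_phiLit {u : Val C} {l : Lit C O} :
    (I ⊨[u] (phiLit l : AFml C O A)) ↔ IForm.sat I (tauLit opFun u l) := by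
  set ws := (List.range l.args.length).map (· + freshVar l.varList)
  have hnd : ws.Nodup := nodup_map_add_range _ _
  have hlen : ws.length = l.args.length := by simp [ws]
  have hfresh : ∀ x ∈ Term.varListL l.args, x ∉ ws := fun x hx hxws =>
    (lt_freshVar hx).not_ge (le_of_mem_map_add_range hxws)
  change (I ⊨[u] AFml.exList ws (AFml.andF (memConj ws l.args) _)) ↔ _
  rw [sat_exList_memConj_andF hnd hlen hfresh, sat_tauLit]
  refine exists_congr fun rs => and_congr_right fun hvals => ?_
  have hrs : ws.map (updList u ws rs) = rs :=
    map_updList_self u ws hnd rs ((Term.vals_length hvals).trans hlen.symm)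
  cases l.pos
  · simp only [Bool.false_eq_true, ↓reduceIte, AFml.sat_negF, sat_atom_vars]
    rw [hrs]
  · simp only [↓reduceIte, sat_atom_vars]
    rw [hrs]

theorem sat_phiComp {u : Val C} {c : Comp C O} :
    (I ⊨[u] (phiComp c : AFml C O A)) ↔ IForm.sat I (tauComp opFun lt u c) := by
  have hval : ∀ (r₁ r₂ : Pre C) (t : Term C O), (∀ x ∈ t.varList, x ∈ c.varList) →
      Term.val opFun (Function.update (Function.update u (freshVar c.varList) r₁)
        (freshVar c.varList + 1) r₂) t = Term.val opFun u t :=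
    fun r₁ r₂ t ht => Term.val_congr t fun x hx => by
    have := lt_freshVar (ht x hx)
    rw [Function.update_of_ne (by omega), Function.update_of_ne (by omega)]
  simp only [phiComp, AFml.sat_exF, AFml.sat_andF, sat_mem_var, sat_tauComp,
    hval _ _ c.lhs fun x hx => List.mem_append_left _ hx,
    hval _ _ c.rhs fun x hx => List.mem_append_right _ hx]
  simp [AFml.sat, AArg.eval]

theorem sat_phiCond {u : Val C} {cond : List (CondElem C O)} :
    (I ⊨[u] (phiCond cond : AFml C O A)) ↔ IForm.sat I (tauCond opFun lt u cond) := by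
  rw [phiCond, AFml.sat_andList, sat_tauCond, List.forall_mem_map]
  refine forall₂_congr fun ce _ => ?_
  cases ce with
  | inl l => exact sat_phiLit
  | inr c => exact sat_phiComp

end PhiTau

section Aggregates

variable {I : Interp C} {loc xs : List ℕ}

theorem exists_eqOff_iff_exists_updList {S : List ℕ} (hxs : xs.Nodup)
    (hxs_loc : ∀ x ∈ xs, x ∈ loc) (hS : ∀ x ∈ S, x ∈ loc → x ∈ xs) {v : Val C}
    {P : Val C → Prop} (hP : ∀ u w : Val C, (∀ x ∈ S, u x = w x) → (P u ↔ P w)) :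
    (∃ w, EqOff loc v w ∧ P w) ↔ ∃ ρ : AggTuple C xs, P (updList v xs ρ.val) := by
  constructor
  · rintro ⟨w, hw, hPw⟩
    refine ⟨⟨xs.map w, List.length_map _⟩, (hP _ _ fun x hx => ?_).2 hPw⟩
    by_cases hx_xs : x ∈ xs
    · exact updList_map_apply_of_mem v w xs hxs x hx_xs
    · rw [updList_apply_of_notMem v xs _ hx_xs]
      exact hw x fun hloc => hx_xs (hS x hx hloc)
  · rintro ⟨ρ, hPρ⟩
    exact ⟨_, fun y hy => (updList_apply_of_notMem v xs ρ.val fun hyxs =>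
      hy (hxs_loc y hyxs)).symm, hPρ⟩

theorem setOf_sat_aggFormula_eq {u v : Val C} {zs : List ℕ} {E : AggExpr C O A}
    (hxs : xs.Nodup) (hxs_loc : ∀ x ∈ xs, x ∈ loc)
    (hE : ∀ x ∈ E.varList, x ∈ loc → x ∈ xs)
    (hu : ∀ x ∈ E.varList, v x = u x) (hnd : zs.Nodup) (hlen : zs.length = E.ts.length)
    (hloc : ∀ z ∈ zs, z ∉ loc) (hvar : ∀ z ∈ zs, z ∉ E.varList) :
    {q | q.length = zs.length ∧
      I ⊨[updList v zs q] AFml.exList loc (AFml.andF (memConj zs E.ts) (phiCond E.cond))} =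
    {q | ∃ ρ ∈ {ρ : AggTuple C xs |
        IForm.sat I (tauCond opFun lt (updList u xs ρ.val) E.cond)},
      Term.vals opFun (updList u xs ρ.val) E.ts q} := by
  set P : List (Pre C) → Val C → Prop := fun q w =>
    Term.vals opFun w E.ts q ∧ IForm.sat I (tauCond opFun lt w E.cond)
  have hP : ∀ q, ∀ u w : Val C, (∀ x ∈ E.varList, u x = w x) → (P q u ↔ P q w) := by
    intro q u w h
    simp only [P, Term.vals_congr E.ts (fun x hx => h x (AggExpr.mem_varList_of_ts hx)),
      tauCond_congr E.cond fun x hx => h x (AggExpr.mem_varList_of_cond hx)]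
  have key : ∀ q : List (Pre C), q.length = zs.length →
      ((I ⊨[updList v zs q] AFml.exList loc (AFml.andF (memConj zs E.ts) (phiCond E.cond))) ↔
        ∃ ρ : AggTuple C xs, P q (updList u xs ρ.val)) := fun q hq => by
    rw [AFml.sat_exList]
    calc (∃ w, EqOff loc (updList v zs q) w ∧ _)
        ↔ ∃ w, EqOff loc (updList v zs q) w ∧ P q w :=
          exists_congr fun w => and_congr_right fun hw => by
            have hzs : zs.map w = q := by
              rw [← List.map_congr_left fun z hz => hw z (hloc z hz),
                map_updList_self v zs hnd q hq]
            rw [AFml.sat_andF, sat_memConj hlen, hzs, sat_phiCond]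
      _ ↔ ∃ ρ : AggTuple C xs, P q (updList (updList v zs q) xs ρ.val) :=
          exists_eqOff_iff_exists_updList hxs hxs_loc hE (hP q)
      _ ↔ ∃ ρ : AggTuple C xs, P q (updList u xs ρ.val) :=
          exists_congr fun ρ => hP q _ _ fun x hx => updList_apply_congr _ _ ρ.2 x
            (.inr ((updList_apply_of_notMem v zs q fun hz => hvar x hz hx).trans (hu x hx)))
  ext q
  constructor
  · rintro ⟨hq, hsat⟩
    obtain ⟨ρ, hvals, hcond⟩ := (key q hq).1 hsat
    exact ⟨ρ, hcond, hvals⟩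
  · rintro ⟨ρ, hcond, hvals⟩
    have hq : q.length = zs.length := (Term.vals_length hvals).trans hlen.symm
    exact ⟨hq, (key q hq).2 ⟨ρ, hvals, hcond⟩⟩

theorem sat_mem_boundTerm {u : Val C} {n : ℕ} {b : ℕ ⊕ Pre C} (hn : n ∉ boundVarList b)
    (r : Pre C) :
    (I ⊨[Function.update u n r] AFml.mem (AArg.var n) (boundTerm b)) ↔ r = boundVal u b := by
  rw [sat_mem_var, Function.update_self]
  cases b with
  | inl x =>
      have hxn : x ≠ n := fun h => hn (h ▸ List.mem_singleton_self x)
      simp [boundTerm, Term.val, boundVal, Function.update_of_ne hxn]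
  | inr p => simp [boundTerm, Pre.val_toTerm, boundVal]

theorem sat_phiAgg {u : Val C} (loc : List ℕ) (E : AggExpr C O A) :
    (I ⊨[u] phiAgg loc E) ↔
      IForm.sat I (tauAgg opFun aggFun lt u (E.varList.dedup.filter (· ∈ loc)) E) := by
  set n := freshVar (loc ++ E.varList)
  set zs := (List.range E.ts.length).map (· + (n + 1))
  set Finner : AFml C O A := AFml.exList loc (AFml.andF (memConj zs E.ts) (phiCond E.cond))
  have hn : ∀ x ∈ loc ++ E.varList, x < n := fun x hx => lt_freshVar hx
  have hzs : ∀ z ∈ zs, n < z := fun z hz => le_of_mem_map_add_range hz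
  have hbound : n ∉ boundVarList E.bound := fun h =>
    (hn n (List.mem_append_right _ (List.mem_append_right _ h))).false
  change (I ⊨[u] AFml.exF n (AFml.andF (AFml.cmp E.rel (AArg.agg E.name zs Finner) (AArg.var n))
    (AFml.mem (AArg.var n) (boundTerm E.bound)))) ↔ _
  rw [sat_tauAgg, AFml.sat_exF]
  simp only [AFml.sat_andF, sat_mem_boundTerm hbound, exists_eq_right]
  change Rel.eval lt E.rel (aggFun E.name {q | q.length = zs.length ∧ I ⊨[_] Finner})
    (Function.update u n (boundVal u E.bound) n) ↔ _
  rw [Function.update_self, setOf_sat_aggFormula_eq ((List.nodup_dedup _).filter _)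
    (fun x hx => (mem_filter_dedup_iff.1 hx).2)
    (fun x hx hloc => mem_filter_dedup_iff.2 ⟨hx, hloc⟩)
    (fun x hx => Function.update_of_ne (hn x (List.mem_append_right _ hx)).ne _ _)
    (nodup_map_add_range _ _) (by simp)
    (fun z hz hz' => (hzs z hz).not_gt (hn z (List.mem_append_left _ hz')))
    (fun z hz hz' => (hzs z hz).not_gt (hn z (List.mem_append_right _ hz')))]
  rfl

end Aggregates

section Bodies

variable {I : Interp C}

theorem sat_phiBody {u : Val C} (loc : List ℕ) (b : List (BElem C O A)) :
    (I ⊨[u] phiBody loc b) ↔ IForm.sat I (tauBody opFun aggFun lt u loc b) := by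
  rw [phiBody, AFml.sat_andList, tauBody, IForm.sat_conjList, List.forall_mem_map,
    List.forall_mem_map]
  refine forall₂_congr fun e _ => ?_
  cases e with
  | lit l => exact sat_phiLit
  | comp c => exact sat_phiComp
  | agg E => exact sat_phiAgg loc E

theorem tauAgg_congr {u w : Val C} {xs : List ℕ} {E : AggExpr C O A}
    (h : ∀ x ∈ E.varList, x ∉ xs → u x = w x)
    (hbound : ∀ x ∈ boundVarList E.bound, u x = w x) :
    tauAgg opFun aggFun lt u xs E = tauAgg opFun aggFun lt w xs E := by
  have hupd (rs : AggTuple C xs) :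
      ∀ x ∈ E.varList, updList u xs rs.val x = updList w xs rs.val x :=
    fun x hx => updList_apply_congr xs rs.val rs.2 x (or_iff_not_imp_left.2 (h x hx))
  have hJ : Justifies opFun aggFun lt u xs E = Justifies opFun aggFun lt w xs E := by
    funext Δ
    have hbv : boundVal u E.bound = boundVal w E.bound := by
      cases hb : E.bound with
      | inl x => exact hbound x (by simp [hb, boundVarList])
      | inr _ => rfl
    simp only [Justifies, hbv, Term.vals_congr E.ts fun x hx =>
      hupd _ x (AggExpr.mem_varList_of_ts hx)]
  have hcond (rs : AggTuple C xs) :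
      tauCond opFun lt (updList u xs rs.val) E.cond =
        tauCond opFun lt (updList w xs rs.val) E.cond :=
    tauCond_congr E.cond fun x hx => hupd rs x (AggExpr.mem_varList_of_cond hx)
  simp only [tauAgg, hcond]
  rw [hJ]

theorem tauBody_congr {R : Rule C O A} {u w : Val C} (h : ∀ x ∈ R.globalList, u x = w x) :
    tauBody opFun aggFun lt u R.localList R.body =
      tauBody opFun aggFun lt w R.localList R.body := by
  rw [tauBody, tauBody, List.map_congr_left fun e he => ?_]
  cases e with
  | lit l => exact tauLit_congr l fun x hx => h x (Rule.mem_globalList_of_lit he hx)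
  | comp c => exact tauComp_congr c fun x hx => h x (Rule.mem_globalList_of_comp he hx)
  | agg E =>
      refine tauAgg_congr (fun x hx hxs => h x (Rule.mem_globalList_of_agg he hx fun hloc =>
        hxs (mem_filter_dedup_iff.2 ⟨hx, hloc⟩)))
        fun x hx => h x (Rule.mem_globalList_of_bound he hx)

end Bodies

section Completion

variable {I : Interp C} {R : Rule C O A} {p : C} {Vs : List ℕ} {w : Val C}

theorem InstanceSupports.definesB [DecidableEq C] {rs : List (Pre C)}
    (h : InstanceSupports opFun aggFun lt I R (p, rs)) : definesB p rs.length R = true := by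
  obtain ⟨v, -, ts, hhead, hvals⟩ := h
  rcases hhead with hhead | hhead <;> simp [EG.definesB, hhead, Term.vals_length hvals]

theorem sat_exList_ruleAnte_of_instanceSupports (hVs : ∀ V ∈ Vs, V ∉ R.globalList)
    (h : InstanceSupports opFun aggFun lt I R (p, Vs.map w)) (hmem : (p, Vs.map w) ∈ I) :
    I ⊨[w] AFml.exList R.globalList (ruleAnte Vs R) := by
  obtain ⟨u, hbody, ts, hhead, hvals⟩ := h
  set w' := updList w R.globalList (R.globalList.map u)
  have hw'u : ∀ x ∈ R.globalList, w' x = u x :=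
    updList_map_apply_of_mem w u _ (List.nodup_dedup _)
  have hVs' : Vs.map w' = Vs.map w :=
    List.map_congr_left fun V hV => updList_apply_of_notMem w _ _ (hVs V hV)
  have hlen : Vs.length = ts.length := by simpa using Term.vals_length hvals
  have hbody' : IForm.sat I (tauBody opFun aggFun lt w' R.localList R.body) := by
    rwa [tauBody_congr hw'u]
  have hvals' : Term.vals opFun w' ts (Vs.map w) := by
    refine (Term.vals_congr ts (fun x hx => hw'u x (Rule.mem_globalList_of_head ?_)) _).2 hvals
    rcases hhead with hhead | hhead <;> rw [hhead] <;> exact hx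
  refine AFml.sat_exList.2 ⟨w', eqOff_updList _ _ _, ?_⟩
  rcases hhead with hhead | hhead <;>
    simp only [ruleAnte, hhead, AFml.sat_andF, sat_memConj hlen, sat_phiBody, sat_atom_vars, hVs']
  · exact ⟨hvals', hbody'⟩
  · exact ⟨hvals', hbody', hmem⟩

theorem mem_of_sat_exList_ruleAnte [DecidableEq C]
    (hR : ∀ v, IForm.sat I (tauRule opFun aggFun lt v R))
    (hdef : definesB p Vs.length R = true) (hVs : ∀ V ∈ Vs, V ∉ R.globalList)
    (h : I ⊨[w] AFml.exList R.globalList (ruleAnte Vs R)) : (p, Vs.map w) ∈ I := by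
  obtain ⟨w', hw', hsat⟩ := AFml.sat_exList.1 h
  rw [List.map_congr_left fun V hV => hw' V (hVs V hV)]
  rcases hhead : R.head with ⟨q, ts⟩ | ⟨q, ts⟩ | _ <;> simp [definesB, hhead] at hdef
  · obtain ⟨rfl, hlen⟩ := hdef
    simp only [ruleAnte, hhead, AFml.sat_andF, sat_memConj hlen.symm, sat_phiBody] at hsat
    have hrule := hR w'
    simp only [tauRule, hhead] at hrule
    exact hrule hsat.2 ⟨_, hsat.1⟩
  · obtain ⟨rfl, -⟩ := hdef
    simp only [ruleAnte, hhead, AFml.sat_andF, sat_atom_vars] at hsat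
    exact hsat.2.2

theorem sat_completedDef [DecidableEq C] {Γ : List (Rule C O A)}
    (hmodel : ∀ R ∈ Γ, ∀ v, IForm.sat I (tauRule opFun aggFun lt v R))
    (hsupp : ∀ a ∈ I, ∃ R ∈ Γ, InstanceSupports opFun aggFun lt I R a) (p : C) (n : ℕ)
    (v : Val C) : I ⊨[v] completedDef Γ p n := by
  set Vs := (List.range n).map (· + freshVar (Γ.flatMap Rule.varList))
  have hVs : ∀ R ∈ Γ, ∀ V ∈ Vs, V ∉ R.globalList := fun R hR V hV hglob =>
    (le_of_mem_map_add_range hV).not_gt (lt_freshVar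
      (List.mem_flatMap.2 ⟨R, hR, Rule.mem_varList_of_mem_globalList hglob⟩))
  have hlen : Vs.length = n := by simp [Vs]
  change I ⊨[v] AFml.allList Vs (AFml.iffF (AFml.atom p (Vs.map AArg.var))
    (AFml.orList ((Γ.filter (definesB p n)).map fun R =>
      AFml.exList R.globalList (ruleAnte Vs R))))
  refine AFml.sat_allList.2 fun w _ => ?_
  rw [AFml.sat_iffF, sat_atom_vars, AFml.sat_orList]
  simp only [List.mem_map, exists_exists_and_eq_and]
  constructor
  · intro hmem
    obtain ⟨R, hR, hsupports⟩ := hsupp _ hmem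
    refine ⟨R, List.mem_filter.2 ⟨hR, ?_⟩,
      sat_exList_ruleAnte_of_instanceSupports (hVs R hR) hsupports hmem⟩
    simpa [hlen] using hsupports.definesB
  · rintro ⟨R, hR, hsat⟩
    obtain ⟨hRΓ, hdef⟩ := List.mem_filter.1 hR
    exact mem_of_sat_exList_ruleAnte (hmodel R hRΓ) (hlen ▸ hdef) (hVs R hRΓ) hsat

end Completion

/-- Theorem 1: every stable model of a finite EG program
satisfies its completion. -/
theorem theorem_1 {C O A : Type} [DecidableEq C]
    (opFun : O → List ℤ → Option ℤ)
    (aggFun : A → Set (List (Pre C)) → Pre C)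
    (lt : Pre C → Pre C → Prop) (hlt : PreOrderOK lt)
    (Γ : List (Rule C O A)) (I : Interp C)
    (hstable : EGStable opFun aggFun lt I {R | R ∈ Γ}) :
    SatCompletion opFun aggFun lt Γ I :=
  ⟨fun p n _ => sat_completedDef (fun _ hR => hstable.sat_tauRule hR)
      (fun _ ha => hstable.supported ha) p n,
    fun R hR hempty v => by
      rw [phiConstraintRep, AFml.sat_negF, sat_phiBody]
      exact hstable.not_sat_tauBody hR hempty v⟩

end EG
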